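/- arXiv:2603.08042 — 3 statements merged into one kernel-verified Lean document; each statement's English description precedes it below -/
import Mathlib

section
/- The sequence of expectations of the arrival process is strictly increasing: for every n ≥ 1, 𝔼(ξ_{n+1}) > 𝔼(ξ_n). -/
/-!
Write `m n = 𝔼 ξ n`. Integrating the conditional intensity gives the renewal equation
`m (n + 1) = a 0 + ∑ k < n, a (n - k) * m (k + 1)`. Peeling off the `k = 0` term of the equation
for `m (n + 2)` gives
`m (n + 2) - m (n + 1) = a (n + 1) * m 1 + ∑ k < n, a (n - k) * (m (k + 2) - m (k + 1))`,
which is positive by strong induction, since `m 1 = a 0 > 0` and all `a i > 0`.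
-/

open MeasureTheory Filter Topology Set

namespace Finset

theorem sum_Icc_one_eq_sum_range {M : Type*} [AddCommMonoid M] (f : ℕ → M) (n : ℕ) :
    ∑ i ∈ Icc 1 n, f i = ∑ k ∈ range n, f (k + 1) := by
  rw [range_eq_Ico, sum_Ico_add', zero_add, ← Ico_add_one_right_eq_Icc]

end Finset

open Finset in
theorem strictMono_of_renewal_eq {a m : ℕ → ℝ} (ha : ∀ i, 0 < a i)
    (hm : ∀ n, m (n + 1) = a 0 + ∑ k ∈ range n, a (n - k) * m (k + 1)) :
    StrictMono fun n => m (n + 1) := by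
  have hm_one : m 1 = a 0 := by simpa using hm 0
  refine strictMono_nat_of_lt_succ fun n => ?_
  induction n using Nat.strong_induction_on with
  | _ n ih =>
  have hm_succ : m (n + 2) = a 0 + a (n + 1) * m 1 + ∑ k ∈ range n, a (n - k) * m (k + 2) := by
    rw [hm (n + 1), sum_range_succ']
    simp only [Nat.add_sub_add_right, Nat.sub_zero]
    ring
  calc m (n + 1) = a 0 + ∑ k ∈ range n, a (n - k) * m (k + 1) := hm n
    _ ≤ a 0 + ∑ k ∈ range n, a (n - k) * m (k + 2) := by
        gcongr with k hk
        · exact (ha _).le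
        · exact (ih k (mem_range.1 hk)).le
    _ < m (n + 2) := by
        rw [hm_succ, hm_one]
        linarith [mul_pos (ha (n + 1)) (ha 0)]

section ZeroOneValued

variable {Ω : Type*} [MeasurableSpace Ω] {μ : Measure Ω} {X : Ω → ℝ}

theorem integrable_of_eq_zero_or_eq_one [IsFiniteMeasure μ] (hX : Measurable X)
    (h01 : ∀ ω, X ω = 0 ∨ X ω = 1) : Integrable X μ :=
  .of_bound hX.aestronglyMeasurable 1 <| .of_forall fun ω => by rcases h01 ω with h | h <;> simp [h]

theorem integral_eq_measureReal_of_eq_zero_or_eq_one (hX : Measurable X)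
    (h01 : ∀ ω, X ω = 0 ∨ X ω = 1) : ∫ ω, X ω ∂μ = μ.real {ω | X ω = 1} := by
  have hX_eq : X = {ω | X ω = 1}.indicator 1 := by
    funext ω
    rcases h01 ω with h | h <;> simp [h]
  conv_lhs => rw [hX_eq]
  exact integral_indicator_one (hX (measurableSet_singleton 1))

end ZeroOneValued

theorem integral_eq_of_condExp_ae_eq_const_add_sum {Ω ι : Type*} {m m₀ : MeasurableSpace Ω}
    {μ : Measure Ω} [IsProbabilityMeasure μ] (hm : m ≤ m₀) {f : Ω → ℝ} (s : Finset ι) (c : ℝ)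
    (w : ι → ℝ) {X : ι → Ω → ℝ} (hX : ∀ i ∈ s, Integrable (X i) μ)
    (hf : μ[f | m] =ᵐ[μ] fun ω => c + ∑ i ∈ s, w i * X i ω) :
    ∫ ω, f ω ∂μ = c + ∑ i ∈ s, w i * ∫ ω, X i ω ∂μ := by
  have hsum : ∀ i ∈ s, Integrable (fun ω => w i * X i ω) μ := fun i hi => (hX i hi).const_mul _
  rw [← integral_condExp hm, integral_congr_ae hf, integral_add (integrable_const c)
    (integrable_finsetSum s hsum), integral_finsetSum s hsum, integral_const, probReal_univ,
    one_smul]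
  simp only [integral_const_mul]

theorem dthp_expectation_strict_mono_general
    {Ω : Type*} [MeasurableSpace Ω] (μ : Measure Ω) [IsProbabilityMeasure μ]
    (a : ℕ → ℝ) (ξ : ℕ → Ω → ℝ)
    (ha_pos : ∀ i, 0 < a i)
    (hmeas : ∀ n, Measurable (ξ n))
    (hval : ∀ n, 1 ≤ n → ∀ ω, ξ n ω = 0 ∨ ξ n ω = 1)
    (hinit : μ {ω | ξ 1 ω = 1} = ENNReal.ofReal (a 0))
    (hcond : ∀ n, 2 ≤ n →
      μ[ξ n | ⨆ i ∈ Finset.Icc 1 (n - 1), MeasurableSpace.comap (ξ i) Real.measurableSpace]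
        =ᵐ[μ] fun ω => a 0 + ∑ i ∈ Finset.Icc 1 (n - 1), a (n - i) * ξ i ω)
    :
    ∀ n, 1 ≤ n → (∫ ω, ξ n ω ∂μ) < ∫ ω, ξ (n + 1) ω ∂μ := by
  have hint : ∀ i, 1 ≤ i → Integrable (ξ i) μ := fun i hi =>
    integrable_of_eq_zero_or_eq_one (hmeas i) (hval i hi)
  have hrenewal : ∀ n, ∫ ω, ξ (n + 1) ω ∂μ =
      a 0 + ∑ k ∈ Finset.range n, a (n - k) * ∫ ω, ξ (k + 1) ω ∂μ := by
    rintro (_ | n)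
    · rw [integral_eq_measureReal_of_eq_zero_or_eq_one (hmeas 1) (hval 1 le_rfl), measureReal_def,
        hinit, ENNReal.toReal_ofReal (ha_pos 0).le, Finset.sum_range_zero, add_zero]
    · have hle : ⨆ i ∈ Finset.Icc 1 (n + 2 - 1), MeasurableSpace.comap (ξ i) Real.measurableSpace
          ≤ ‹MeasurableSpace Ω› := iSup₂_le fun i _ => (hmeas i).comap_le
      rw [integral_eq_of_condExp_ae_eq_const_add_sum hle _ _ _
        (fun i hi => hint i (Finset.mem_Icc.1 hi).1) (hcond (n + 2) (by omega)),
        show n + 2 - 1 = n + 1 by omega, Finset.sum_Icc_one_eq_sum_range]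
      congr 1
      refine Finset.sum_congr rfl fun k _ => ?_
      rw [show n + 2 - (k + 1) = n + 1 - k by omega]
  intro n hn
  obtain ⟨k, rfl⟩ := Nat.exists_eq_add_of_le' hn
  exact strictMono_of_renewal_eq (m := fun n => ∫ ω, ξ n ω ∂μ) ha_pos hrenewal k.lt_succ_self

theorem dthp_expectation_strict_mono
    {Ω : Type*} [MeasurableSpace Ω] (μ : Measure Ω) [IsProbabilityMeasure μ]
    (a : ℕ → ℝ) (ξ : ℕ → Ω → ℝ)
    (ha_pos : ∀ i, 0 < a i)
    (ha_sum : Summable a)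
    (ha_lt_one : ∑' i, a i < 1)
    (ha_moment : Summable (fun i : ℕ => (i : ℝ) * a i))
    (hmeas : ∀ n, Measurable (ξ n))
    (hval : ∀ n, 1 ≤ n → ∀ ω, ξ n ω = 0 ∨ ξ n ω = 1)
    (hinit : μ {ω | ξ 1 ω = 1} = ENNReal.ofReal (a 0))
    (hcond : ∀ n, 2 ≤ n →
      μ[ξ n | ⨆ i ∈ Finset.Icc 1 (n - 1), MeasurableSpace.comap (ξ i) Real.measurableSpace]
        =ᵐ[μ] fun ω => a 0 + ∑ i ∈ Finset.Icc 1 (n - 1), a (n - i) * ξ i ω)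
    :
    ∀ n, 1 ≤ n → (∫ ω, ξ n ω ∂μ) < ∫ ω, ξ (n + 1) ω ∂μ :=
  dthp_expectation_strict_mono_general μ a ξ ha_pos hmeas hval hinit hcond
end

section
/- The Cesàro averages of the expectations of the arrival process converge: (1/n) Σ_{i=1}^n 𝔼(ξ_i) = 𝔼(H_n)/n → a_0 / (1 − Σ_{i=1}^∞ a_i) as n → ∞. -/
/-!
Taking expectations in the conditional-intensity identity shows that `u k = 𝔼 ξ_{k+1}` solves the
renewal equation `u n = a₀ + ∑_{i<n} b_{n-1-i} u i` with `b j = a_{j+1}`. Bounding `|u n|` by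
induction gives `|u| ≤ |a₀| / (1 - s)`, where `s = ∑ b`. Summing the equation up to `N` and
exchanging the sums gives `(1 - s) ∑_{i<N} u i = N a₀ - ∑_{i<N} u i r_{N-1-i}`, with tails
`r k = ∑_{j ≥ k} b j`; the error is at most `|a₀| / (1 - s) · ∑_{k<N} r k = o(N)` since `r k → 0`.
-/

open Filter Topology

theorem Finset.sum_Icc_one_eq_sum_range_s4 {M : Type*} [AddCommMonoid M] (f : ℕ → M) (n : ℕ) :
    ∑ i ∈ Finset.Icc 1 n, f i = ∑ i ∈ Finset.range n, f (i + 1) := by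
  rw [Finset.range_eq_Ico, Finset.sum_Ico_add']
  rfl

section Renewal

open Finset

variable {b u : ℕ → ℝ} {c : ℝ}

theorem Summable.tsum_nat_add_succ (hb : Summable b) (k : ℕ) :
    ∑' j, b (j + (k + 1)) = ∑' j, b (j + k) - b k := by
  have h := hb.sum_add_tsum_nat_add k
  rw [← hb.sum_add_tsum_nat_add (k + 1), sum_range_succ] at h
  linarith

theorem abs_le_of_renewal (hb : ∀ j, 0 ≤ b j) (hb_sum : Summable b) (hs : ∑' j, b j < 1)
    (hu : ∀ n, u n = c + ∑ i ∈ range n, b (n - 1 - i) * u i) (n : ℕ) :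
    |u n| ≤ |c| / (1 - ∑' j, b j) := by
  set M := |c| / (1 - ∑' j, b j)
  have hM_nonneg : 0 ≤ M := div_nonneg (abs_nonneg c) (sub_pos.mpr hs).le
  have hM : |c| + (∑' j, b j) * M = M := by
    have : 1 - ∑' j, b j ≠ 0 := (sub_pos.mpr hs).ne'
    simp only [M]
    field_simp
    ring
  induction n using Nat.strong_induction_on with
  | _ n ih =>
  calc |u n| ≤ |c| + ∑ i ∈ range n, b (n - 1 - i) * |u i| := by
        rw [hu n]
        refine (abs_add_le _ _).trans (add_le_add_right ?_ _)
        refine (abs_sum_le_sum_abs _ _).trans_eq (sum_congr rfl fun i _ => ?_)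
        rw [abs_mul, abs_of_nonneg (hb _)]
    _ ≤ |c| + ∑ i ∈ range n, b (n - 1 - i) * M := by
        gcongr with i hi
        · exact hb _
        · exact ih i (mem_range.mp hi)
    _ = |c| + (∑ j ∈ range n, b j) * M := by rw [← sum_mul, sum_range_reflect b n]
    _ ≤ |c| + (∑' j, b j) * M := by
        gcongr
        exact hb_sum.sum_le_tsum _ fun j _ => hb j
    _ = M := hM

theorem one_sub_tsum_mul_sum_range_of_renewal (hb_sum : Summable b)
    (hu : ∀ n, u n = c + ∑ i ∈ range n, b (n - 1 - i) * u i) (N : ℕ) :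
    (1 - ∑' j, b j) * ∑ i ∈ range N, u i
      = N * c - ∑ i ∈ range N, u i * ∑' j, b (j + (N - 1 - i)) := by
  induction N with
  | zero => simp
  | succ N ih =>
    have htail : ∀ i ∈ range N, u i * ∑' j, b (j + (N + 1 - 1 - i))
        = u i * ∑' j, b (j + (N - 1 - i)) - b (N - 1 - i) * u i := by
      intro i hi
      rw [show N + 1 - 1 - i = N - 1 - i + 1 by have := mem_range.mp hi; omega,
        hb_sum.tsum_nat_add_succ]
      ring
    rw [sum_range_succ, sum_range_succ, sum_congr rfl htail, sum_sub_distrib,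
      Nat.add_sub_cancel, Nat.sub_self]
    simp only [add_zero]
    push_cast
    linear_combination ih + hu N

theorem tendsto_sum_range_div_of_renewal (hb : ∀ j, 0 ≤ b j) (hb_sum : Summable b)
    (hs : ∑' j, b j < 1) (hu : ∀ n, u n = c + ∑ i ∈ range n, b (n - 1 - i) * u i) :
    Tendsto (fun N : ℕ => (∑ i ∈ range N, u i) / N) atTop (𝓝 (c / (1 - ∑' j, b j))) := by
  set M := |c| / (1 - ∑' j, b j)
  set E : ℕ → ℝ := fun N => ∑ i ∈ range N, u i * ∑' j, b (j + (N - 1 - i))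
  have htail_nonneg : ∀ k, 0 ≤ ∑' j, b (j + k) := fun k => tsum_nonneg fun j => hb _
  have hE : Tendsto (fun N : ℕ => E N / N) atTop (𝓝 0) := by
    have hr : Tendsto (fun N : ℕ => M * ((N : ℝ)⁻¹ * ∑ k ∈ range N, ∑' j, b (j + k)))
        atTop (𝓝 0) := by
      simpa using (tendsto_sum_nat_add b).cesaro.const_mul M
    refine squeeze_zero_norm (fun N => ?_) hr
    calc ‖E N / N‖ = |E N| / N := by rw [norm_div, Real.norm_eq_abs, RCLike.norm_natCast]
      _ ≤ (∑ i ∈ range N, M * ∑' j, b (j + (N - 1 - i))) / N := by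
          gcongr
          refine (abs_sum_le_sum_abs _ _).trans (sum_le_sum fun i _ => ?_)
          rw [abs_mul, abs_of_nonneg (htail_nonneg _)]
          exact mul_le_mul_of_nonneg_right (abs_le_of_renewal hb hb_sum hs hu i) (htail_nonneg _)
      _ = M * ((N : ℝ)⁻¹ * ∑ k ∈ range N, ∑' j, b (j + k)) := by
          rw [← mul_sum, sum_range_reflect (fun k => ∑' j, b (j + k)) N]
          ring
  have hs' : 1 - ∑' j, b j ≠ 0 := (sub_pos.mpr hs).ne'
  have hlim := ((tendsto_const_nhds (x := c)).sub hE).div_const (1 - ∑' j, b j)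
  rw [sub_zero] at hlim
  refine hlim.congr' ?_
  filter_upwards [eventually_ne_atTop 0] with N hN
  have hN' : (N : ℝ) ≠ 0 := Nat.cast_ne_zero.mpr hN
  have := one_sub_tsum_mul_sum_range_of_renewal hb_sum hu N
  simp only [E]
  field_simp
  linear_combination -this

end Renewal

open MeasureTheory Set

section ZeroOne

variable {Ω : Type*} [MeasurableSpace Ω] {μ : Measure Ω} {f : Ω → ℝ}

theorem integral_eq_measureReal_of_eq_zero_or_one (hf : Measurable f)
    (h01 : ∀ ω, f ω = 0 ∨ f ω = 1) : ∫ ω, f ω ∂μ = μ.real {ω | f ω = 1} := by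
  have hind : f = {ω | f ω = 1}.indicator 1 := by
    funext ω
    rcases h01 ω with h | h <;> simp [h]
  conv_lhs => rw [hind]
  exact integral_indicator_one (hf (measurableSet_singleton 1))

theorem integrable_of_eq_zero_or_one [IsFiniteMeasure μ] (hf : Measurable f)
    (h01 : ∀ ω, f ω = 0 ∨ f ω = 1) : Integrable f μ :=
  .of_bound hf.aestronglyMeasurable 1 <| ae_of_all _ fun ω => by rcases h01 ω with h | h <;> simp [h]

end ZeroOne

theorem integral_eq_of_condExp_ae_eq_add_sum {Ω ι : Type*} {m m₀ : MeasurableSpace Ω}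
    {μ : Measure Ω} [IsProbabilityMeasure μ] (hm : m ≤ m₀) {f : Ω → ℝ} {g : ι → Ω → ℝ}
    {s : Finset ι} {c : ℝ} {w : ι → ℝ}
    (hf : μ[f | m] =ᵐ[μ] fun ω => c + ∑ i ∈ s, w i * g i ω)
    (hg : ∀ i ∈ s, Integrable (g i) μ) :
    ∫ ω, f ω ∂μ = c + ∑ i ∈ s, w i * ∫ ω, g i ω ∂μ := by
  have hwg : ∀ i ∈ s, Integrable (fun ω => w i * g i ω) μ := fun i hi => (hg i hi).const_mul _
  rw [← integral_condExp hm, integral_congr_ae hf, integral_add (integrable_const c)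
    (integrable_finsetSum s hwg), integral_finsetSum s hwg, integral_const, probReal_univ,
    one_smul]
  simp only [integral_const_mul]

theorem dthp_cesaro_expectation_tendsto_general
    {Ω : Type*} [MeasurableSpace Ω] (μ : Measure Ω) [IsProbabilityMeasure μ]
    (a : ℕ → ℝ) (ξ : ℕ → Ω → ℝ)
    (ha_pos : ∀ i, 0 < a i)
    (ha_sum : Summable a)
    (ha_lt_one : ∑' i, a i < 1)
    (hmeas : ∀ n, Measurable (ξ n))
    (hval : ∀ n, 1 ≤ n → ∀ ω, ξ n ω = 0 ∨ ξ n ω = 1)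
    (hinit : μ {ω | ξ 1 ω = 1} = ENNReal.ofReal (a 0))
    (hcond : ∀ n, 2 ≤ n →
      μ[ξ n | ⨆ i ∈ Finset.Icc 1 (n - 1), MeasurableSpace.comap (ξ i) Real.measurableSpace]
        =ᵐ[μ] fun ω => a 0 + ∑ i ∈ Finset.Icc 1 (n - 1), a (n - i) * ξ i ω)
    :
    Tendsto (fun n => (∑ i ∈ Finset.Icc 1 n, ∫ ω, ξ i ω ∂μ) / n) atTop
      (𝓝 (a 0 / (1 - ∑' i, a (i + 1)))) := by
  set m : ℕ → ℝ := fun n => ∫ ω, ξ n ω ∂μ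
  have hrec : ∀ n, m (n + 1) = a 0 + ∑ i ∈ Finset.Icc 1 n, a (n + 1 - i) * m i := by
    rintro (_ | n)
    · simp [m, integral_eq_measureReal_of_eq_zero_or_one (hmeas 1) (hval 1 le_rfl),
        measureReal_def, hinit, (ha_pos 0).le]
    · exact integral_eq_of_condExp_ae_eq_add_sum (iSup₂_le fun i _ => (hmeas i).comap_le)
        (hcond (n + 2) (by omega)) fun i hi =>
          integrable_of_eq_zero_or_one (hmeas i) (hval i (Finset.mem_Icc.mp hi).1)
  have hs : ∑' i, a (i + 1) < 1 := by linarith [ha_sum.tsum_eq_zero_add, ha_pos 0]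
  have hrenewal : ∀ n, m (n + 1) = a 0 + ∑ i ∈ Finset.range n, a (n - 1 - i + 1) * m (i + 1) := by
    intro n
    rw [hrec, Finset.sum_Icc_one_eq_sum_range_s4]
    refine congrArg _ (Finset.sum_congr rfl fun i hi => ?_)
    rw [show n + 1 - (i + 1) = n - 1 - i + 1 by have := Finset.mem_range.mp hi; omega]
  simpa [Finset.sum_Icc_one_eq_sum_range_s4] using tendsto_sum_range_div_of_renewal
    (fun j => (ha_pos (j + 1)).le) ((summable_nat_add_iff 1).mpr ha_sum) hs hrenewal

theorem dthp_cesaro_expectation_tendsto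
    {Ω : Type*} [MeasurableSpace Ω] (μ : Measure Ω) [IsProbabilityMeasure μ]
    (a : ℕ → ℝ) (ξ : ℕ → Ω → ℝ)
    (ha_pos : ∀ i, 0 < a i)
    (ha_sum : Summable a)
    (ha_lt_one : ∑' i, a i < 1)
    (ha_moment : Summable (fun i : ℕ => (i : ℝ) * a i))
    (hmeas : ∀ n, Measurable (ξ n))
    (hval : ∀ n, 1 ≤ n → ∀ ω, ξ n ω = 0 ∨ ξ n ω = 1)
    (hinit : μ {ω | ξ 1 ω = 1} = ENNReal.ofReal (a 0))
    (hcond : ∀ n, 2 ≤ n →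
      μ[ξ n | ⨆ i ∈ Finset.Icc 1 (n - 1), MeasurableSpace.comap (ξ i) Real.measurableSpace]
        =ᵐ[μ] fun ω => a 0 + ∑ i ∈ Finset.Icc 1 (n - 1), a (n - i) * ξ i ω)
    :
    Tendsto (fun n => (∑ i ∈ Finset.Icc 1 n, ∫ ω, ξ i ω ∂μ) / n) atTop
      (𝓝 (a 0 / (1 - ∑' i, a (i + 1)))) :=
  dthp_cesaro_expectation_tendsto_general μ a ξ ha_pos ha_sum ha_lt_one hmeas hval hinit hcond
end

section
/- For every t ∈ ℝ, liminf_{n→∞} 𝔼(e^{t H_{n+1}}) / 𝔼(e^{t H_n}) ≥ 1 + (e^t − 1) · a_0 / (1 − Σ_{i=1}^∞ a_i). -/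
/-!
The history `(ξ₁, …, ξₙ)` is a Markov chain on Boolean vectors: one step appends a coordinate
that equals `1` with probability `λₙ = a₀ + ∑ᵢ aₙ₊₁₋ᵢ ξᵢ`, an increasing function of the history.
Such a chain is associated (Harris–FKG, by induction along the chain). Since `(eᵗ - 1) e^{t Hₙ}`
and `λₙ` are both increasing,
`𝔼 e^{t Hₙ₊₁} = 𝔼 e^{t Hₙ} + 𝔼[(eᵗ - 1) e^{t Hₙ} λₙ] ≥ 𝔼 e^{t Hₙ} (1 + (eᵗ - 1) 𝔼 ξₙ₊₁)`.
The means `𝔼 ξₙ₊₁` solve a defective renewal equation, so they increase to its fixed point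
`a₀ / (1 - ∑_{i ≥ 1} aᵢ)`.
-/

open MeasureTheory Filter Topology Set

namespace DTHP

theorem sum_range_sub_eq_sum_range_succ {M : Type*} [AddCommMonoid M] (f : ℕ → M) (m : ℕ) :
    ∑ j ∈ Finset.range m, f (m - j) = ∑ k ∈ Finset.range m, f (k + 1) := by
  rw [← Finset.sum_range_reflect]
  exact Finset.sum_congr rfl fun j hj => by
    have := Finset.mem_range.1 hj
    congr 1
    omega

theorem sum_Icc_one_eq_sum_fin {M : Type*} [AddCommMonoid M] {m : ℕ} (f : ℕ → M) :
    ∑ i ∈ Finset.Icc 1 m, f i = ∑ j : Fin m, f (j + 1) := by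
  rw [Fin.sum_univ_eq_sum_range (fun j => f (j + 1)), Finset.range_eq_Ico, Finset.sum_Ico_add']
  rfl

theorem integral_mul_eq_integral_mul_of_condExp_ae_eq {Ω : Type*} {m m₀ : MeasurableSpace Ω}
    {μ : Measure Ω} (hm : m ≤ m₀) [SigmaFinite (μ.trim hm)] {f g k : Ω → ℝ}
    (hf : StronglyMeasurable[m] f) (hfg : Integrable (f * g) μ) (hg : Integrable g μ)
    (hk : μ[g | m] =ᵐ[μ] k) : ∫ ω, f ω * g ω ∂μ = ∫ ω, f ω * k ω ∂μ :=
  calc ∫ ω, f ω * g ω ∂μ = ∫ ω, (μ[f * g | m]) ω ∂μ := (integral_condExp hm).symm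
    _ = ∫ ω, f ω * k ω ∂μ := integral_congr_ae <|
      (condExp_mul_of_stronglyMeasurable_left hf hfg hg).trans (hk.mono fun ω hω => by
        simp [hω])

section Renewal

variable {a q : ℕ → ℝ}

theorem renewal_monotone (ha : ∀ i, 0 ≤ a i)
    (hq : ∀ m, q m = a 0 + ∑ j ∈ Finset.range m, a (m - j) * q j) : Monotone q := by
  refine monotone_nat_of_le_succ fun m => ?_
  induction m using Nat.strong_induction_on with
  | _ m ih =>
    have hdiff : q (m + 1) - q m
        = a (m + 1) * q 0 + ∑ j ∈ Finset.range m, a (m - j) * (q (j + 1) - q j) := by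
      rw [hq (m + 1), hq m, Finset.sum_range_succ']
      simp only [mul_sub, Finset.sum_sub_distrib, Nat.sub_zero]
      have : ∀ j ∈ Finset.range m, a (m + 1 - (j + 1)) = a (m - j) := fun j _ => by
        congr 1; omega
      rw [Finset.sum_congr rfl fun j hj => by rw [this j hj]]
      ring
    have hq0 : 0 ≤ q 0 := by rw [hq 0]; simpa using ha 0
    have hrest : 0 ≤ ∑ j ∈ Finset.range m, a (m - j) * (q (j + 1) - q j) :=
      Finset.sum_nonneg fun j hj =>
        mul_nonneg (ha _) (sub_nonneg.2 (ih j (Finset.mem_range.1 hj)))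
    linarith [mul_nonneg (ha (m + 1)) hq0]

theorem renewal_nonneg (ha : ∀ i, 0 ≤ a i)
    (hq : ∀ m, q m = a 0 + ∑ j ∈ Finset.range m, a (m - j) * q j) (m : ℕ) : 0 ≤ q m :=
  (ha 0).trans (by simpa [hq 0] using renewal_monotone ha hq (Nat.zero_le m))

variable (ha : ∀ i, 0 ≤ a i) (hsum : Summable fun i => a (i + 1))
  (hA : ∑' i, a (i + 1) < 1)
  (hq : ∀ m, q m = a 0 + ∑ j ∈ Finset.range m, a (m - j) * q j)
include ha hsum hA hq

theorem renewal_le (m : ℕ) : q m ≤ a 0 / (1 - ∑' i, a (i + 1)) := by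
  set A := ∑' i, a (i + 1)
  rw [le_div_iff₀ (by linarith)]
  have hmono := renewal_monotone ha hq
  have hpart : ∑ k ∈ Finset.range m, a (k + 1) ≤ A := hsum.sum_le_tsum _ fun i _ => ha _
  calc q m * (1 - A) = q m - A * q m := by ring
    _ ≤ q m - (∑ j ∈ Finset.range m, a (m - j)) * q m := by
      rw [sum_range_sub_eq_sum_range_succ a m]
      exact sub_le_sub_left (mul_le_mul_of_nonneg_right hpart (renewal_nonneg ha hq m)) _
    _ ≤ q m - ∑ j ∈ Finset.range m, a (m - j) * q j := by
      rw [Finset.sum_mul]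
      gcongr with j hj
      · exact ha _
      · exact hmono (Finset.mem_range.1 hj).le
    _ = a 0 := by linarith [hq m]

theorem renewal_tendsto : Tendsto q atTop (𝓝 (a 0 / (1 - ∑' i, a (i + 1)))) := by
  set A := ∑' i, a (i + 1)
  have hmono := renewal_monotone ha hq
  have hq_nonneg := renewal_nonneg ha hq
  have hbdd : BddAbove (range q) := ⟨_, forall_mem_range.2 (renewal_le ha hsum hA hq)⟩
  have hlim := tendsto_atTop_ciSup hmono hbdd
  set L := ⨆ m, q m
  -- the last `K` terms of the renewal sum for `q (m + K)` only involve `q j` with `m ≤ j`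
  have hwindow : ∀ K m, a 0 + (∑ k ∈ Finset.range K, a (k + 1)) * q m ≤ q (m + K) := by
    intro K m
    rw [hq (m + K), Finset.sum_range_add, ← sum_range_sub_eq_sum_range_succ, Finset.sum_mul]
    have hold : 0 ≤ ∑ j ∈ Finset.range m, a (m + K - j) * q j :=
      Finset.sum_nonneg fun j _ => mul_nonneg (ha _) (hq_nonneg j)
    have hnew : ∑ i ∈ Finset.range K, a (K - i) * q m
        ≤ ∑ i ∈ Finset.range K, a (m + K - (m + i)) * q (m + i) :=
      Finset.sum_le_sum fun i _ => by
        rw [Nat.add_sub_add_left]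
        exact mul_le_mul_of_nonneg_left (hmono (Nat.le_add_right m i)) (ha _)
    linarith
  have hfix : a 0 + A * L ≤ L := by
    have hK : ∀ K, a 0 + (∑ k ∈ Finset.range K, a (k + 1)) * L ≤ L := fun K =>
      le_of_tendsto_of_tendsto' (tendsto_const_nhds.add (hlim.const_mul _))
        (hlim.comp (tendsto_add_atTop_nat K)) (hwindow K)
    exact le_of_tendsto' (tendsto_const_nhds.add (hsum.hasSum.tendsto_sum_nat.mul_const L)) hK
  have hL : L = a 0 / (1 - A) := by
    refine le_antisymm (ciSup_le (renewal_le ha hsum hA hq)) ?_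
    rw [div_le_iff₀ (by linarith)]
    linarith
  rwa [← hL]

end Renewal

theorem bernoulli_mean_mul_mean_le {q x₀ x₁ y₀ y₁ : ℝ} (hq₀ : 0 ≤ q) (hq₁ : q ≤ 1) (hx : x₀ ≤ x₁)
    (hy : y₀ ≤ y₁) :
    ((1 - q) * x₀ + q * x₁) * ((1 - q) * y₀ + q * y₁) ≤ (1 - q) * (x₀ * y₀) + q * (x₁ * y₁) := by
  have : 0 ≤ q * (1 - q) * ((x₁ - x₀) * (y₁ - y₀)) :=
    mul_nonneg (mul_nonneg hq₀ (sub_nonneg.2 hq₁)) (mul_nonneg (sub_nonneg.2 hx) (sub_nonneg.2 hy))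
  nlinarith

section Kernel

variable {a : ℕ → ℝ} {m : ℕ}

/-- `ℙ(ξₘ₊₁ = 1 | (ξ₁, …, ξₘ) = b)`: coordinate `j` of `b` records `ξⱼ₊₁`, at lag `m - j`. -/
noncomputable def intensity (a : ℕ → ℝ) (m : ℕ) (b : Fin m → Bool) : ℝ :=
  a 0 + ∑ j : Fin m, a (m - j) * (b j).toNat

/-- `transition a m F b` is the conditional expectation of `F` of the next history given that the
current history is `b`. -/
noncomputable def transition (a : ℕ → ℝ) (m : ℕ) (F : (Fin (m + 1) → Bool) → ℝ)
    (b : Fin m → Bool) : ℝ :=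
  (1 - intensity a m b) * F (Fin.snoc b false) + intensity a m b * F (Fin.snoc b true)

theorem intensity_mono (ha : ∀ i, 0 ≤ a i) : Monotone (intensity a m) := fun b b' h => by
  unfold intensity
  gcongr with j
  · exact ha _
  · exact Bool.toNat_le_toNat (h j)

theorem intensity_nonneg (ha : ∀ i, 0 ≤ a i) (b : Fin m → Bool) : 0 ≤ intensity a m b :=
  add_nonneg (ha 0) (Finset.sum_nonneg fun _ _ => mul_nonneg (ha _) (Nat.cast_nonneg _))

theorem intensity_le_one (ha : ∀ i, 0 ≤ a i) (hsum : Summable fun i => a (i + 1))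
    (hle : a 0 + ∑' i, a (i + 1) ≤ 1) (b : Fin m → Bool) : intensity a m b ≤ 1 := by
  have hb : ∑ j : Fin m, a (m - j) * (b j).toNat ≤ ∑ k ∈ Finset.range m, a (k + 1) := by
    rw [← sum_range_sub_eq_sum_range_succ, ← Fin.sum_univ_eq_sum_range (fun j => a (m - j))]
    exact Finset.sum_le_sum fun j _ =>
      mul_le_of_le_one_right (ha _) (by exact_mod_cast Bool.toNat_le (b j))
  have := hsum.sum_le_tsum (Finset.range m) fun i _ => ha _
  unfold intensity
  linarith

theorem snoc_le_snoc {b b' : Fin m → Bool} (h : b ≤ b') {x y : Bool} (hxy : x ≤ y) :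
    (Fin.snoc b x : Fin (m + 1) → Bool) ≤ Fin.snoc b' y := fun i =>
  Fin.lastCases (by simpa using hxy) (fun j => by simpa using h j) i

variable (ha : ∀ i, 0 ≤ a i) (hsum : Summable fun i => a (i + 1))
  (hle : a 0 + ∑' i, a (i + 1) ≤ 1)
include ha hsum hle

theorem transition_mono {F : (Fin (m + 1) → Bool) → ℝ} (hF : Monotone F) :
    Monotone (transition a m F) := by
  intro b b' hbb'
  have hq := intensity_mono (m := m) ha hbb'
  have hq₁ := intensity_le_one ha hsum hle b'
  have h₀ := hF (snoc_le_snoc hbb' le_rfl : Fin.snoc b false ≤ Fin.snoc b' false)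
  have h₁ := hF (snoc_le_snoc hbb' le_rfl : Fin.snoc b true ≤ Fin.snoc b' true)
  have hjump := hF (snoc_le_snoc le_rfl (Bool.false_le true) : Fin.snoc b false ≤ Fin.snoc b true)
  unfold transition
  nlinarith [intensity_nonneg ha b']

theorem transition_mul_transition_le {F G : (Fin (m + 1) → Bool) → ℝ} (hF : Monotone F)
    (hG : Monotone G) (b : Fin m → Bool) :
    transition a m F b * transition a m G b ≤ transition a m (F * G) b :=
  bernoulli_mean_mul_mean_le (intensity_nonneg ha b) (intensity_le_one ha hsum hle b)
    (hF (snoc_le_snoc le_rfl (Bool.false_le true))) (hG (snoc_le_snoc le_rfl (Bool.false_le true)))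

end Kernel

section Mgf

noncomputable def expCount (t : ℝ) {m : ℕ} (b : Fin m → Bool) : ℝ :=
  Real.exp (t * ∑ j, ((b j).toNat : ℝ))

variable {a : ℕ → ℝ} {m : ℕ}

theorem expCount_snoc (t : ℝ) (b : Fin m → Bool) (x : Bool) :
    expCount t (Fin.snoc b x : Fin (m + 1) → Bool) = expCount t b * Real.exp (t * x.toNat) := by
  simp [expCount, Fin.sum_univ_castSucc, mul_add, Real.exp_add]

theorem transition_expCount (t : ℝ) (b : Fin m → Bool) :
    transition a m (expCount t) b
      = expCount t b * (1 + (Real.exp t - 1) * intensity a m b) := by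
  simp only [transition, expCount_snoc, Bool.toNat_false, Bool.toNat_true, Nat.cast_zero,
    Nat.cast_one, mul_zero, mul_one, Real.exp_zero]
  ring

theorem monotone_mul_expCount (t : ℝ) :
    Monotone fun b : Fin m → Bool => (Real.exp t - 1) * expCount t b := by
  intro b b' hb
  have hcount : ∑ j, ((b j).toNat : ℝ) ≤ ∑ j, ((b' j).toNat : ℝ) :=
    Finset.sum_le_sum fun j _ => by exact_mod_cast Bool.toNat_le_toNat (hb j)
  rcases le_total 0 t with ht | ht
  · exact mul_le_mul_of_nonneg_left (Real.exp_le_exp.2 (mul_le_mul_of_nonneg_left hcount ht))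
      (sub_nonneg.2 (Real.one_le_exp ht))
  · exact mul_le_mul_of_nonpos_left (Real.exp_le_exp.2 (mul_le_mul_of_nonpos_left hcount ht))
      (sub_nonpos.2 (Real.exp_le_one_iff.2 ht))

end Mgf

structure IsDiscreteHawkes {Ω : Type*} [MeasurableSpace Ω] (μ : Measure Ω) (a : ℕ → ℝ)
    (ξ : ℕ → Ω → ℝ) : Prop where
  measurable : ∀ n, Measurable (ξ n)
  mem_zero_one : ∀ n, 1 ≤ n → ∀ ω, ξ n ω = 0 ∨ ξ n ω = 1
  measure_first : μ {ω | ξ 1 ω = 1} = ENNReal.ofReal (a 0)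
  condExp_eq : ∀ n, 2 ≤ n →
    μ[ξ n | ⨆ i ∈ Finset.Icc 1 (n - 1), MeasurableSpace.comap (ξ i) Real.measurableSpace]
      =ᵐ[μ] fun ω => a 0 + ∑ i ∈ Finset.Icc 1 (n - 1), a (n - i) * ξ i ω

section History

variable {Ω : Type*} {ξ : ℕ → Ω → ℝ} {m : ℕ}

noncomputable def history (ξ : ℕ → Ω → ℝ) (m : ℕ) (ω : Ω) : Fin m → Bool :=
  fun j => ξ (j + 1) ω = 1

theorem history_succ (ω : Ω) :
    history ξ (m + 1) ω = Fin.snoc (history ξ m ω) (decide (ξ (m + 1) ω = 1)) := by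
  funext i
  refine Fin.lastCases ?_ (fun j => ?_) i <;> simp [history]

theorem history_zero (ω : Ω) : history ξ 0 ω = Fin.elim0 :=
  Subsingleton.elim _ _

theorem xi_eq_toNat (hval : ∀ n, 1 ≤ n → ∀ ω, ξ n ω = 0 ∨ ξ n ω = 1) {i : ℕ} (hi : 1 ≤ i)
    (ω : Ω) : ξ i ω = (decide (ξ i ω = 1)).toNat := by
  rcases hval i hi ω with h | h <;> simp [h]

theorem xi_succ_eq_history (hval : ∀ n, 1 ≤ n → ∀ ω, ξ n ω = 0 ∨ ξ n ω = 1) (j : Fin m)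
    (ω : Ω) : ξ (j + 1) ω = (history ξ m ω j).toNat :=
  xi_eq_toNat hval (Nat.le_add_left 1 j) ω

theorem sum_Icc_mul_xi (hval : ∀ n, 1 ≤ n → ∀ ω, ξ n ω = 0 ∨ ξ n ω = 1) (c : ℕ → ℝ) (ω : Ω) :
    ∑ i ∈ Finset.Icc 1 m, c i * ξ i ω = ∑ j : Fin m, c (j + 1) * (history ξ m ω j).toNat := by
  simp only [sum_Icc_one_eq_sum_fin fun i => c i * ξ i ω, xi_succ_eq_history hval]

theorem intensity_history (hval : ∀ n, 1 ≤ n → ∀ ω, ξ n ω = 0 ∨ ξ n ω = 1) (a : ℕ → ℝ) (ω : Ω) :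
    a 0 + ∑ i ∈ Finset.Icc 1 m, a (m + 1 - i) * ξ i ω = intensity a m (history ξ m ω) := by
  rw [sum_Icc_mul_xi hval]
  simp only [intensity, Nat.add_sub_add_right]

theorem comp_history_succ (hval : ∀ n, 1 ≤ n → ∀ ω, ξ n ω = 0 ∨ ξ n ω = 1)
    (F : (Fin (m + 1) → Bool) → ℝ) (ω : Ω) :
    F (history ξ (m + 1) ω) = F (Fin.snoc (history ξ m ω) false)
      + (F (Fin.snoc (history ξ m ω) true) - F (Fin.snoc (history ξ m ω) false)) * ξ (m + 1) ω := by
  rw [history_succ]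
  rcases hval (m + 1) (Nat.le_add_left 1 m) ω with hω | hω <;> simp [hω]

theorem measurable_history {m' : MeasurableSpace Ω} (h : ∀ j : Fin m, Measurable[m'] (ξ (j + 1))) :
    Measurable[m'] (history ξ m) :=
  measurable_pi_lambda _ fun j => measurable_to_bool <| by
    simpa [history, Set.preimage] using h j (measurableSet_singleton 1)

variable [MeasurableSpace Ω] {μ : Measure Ω}

theorem integrable_comp_history [IsFiniteMeasure μ] (hmeas : ∀ n, Measurable (ξ n))
    (F : (Fin m → Bool) → ℝ) : Integrable (fun ω => F (history ξ m ω)) μ :=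
  Integrable.of_finite.comp_measurable (measurable_history fun _ => hmeas _)

theorem integral_expCount_pos [IsFiniteMeasure μ] [NeZero μ] (hmeas : ∀ n, Measurable (ξ n))
    (t : ℝ) (n : ℕ) : 0 < ∫ ω, expCount t (history ξ n ω) ∂μ :=
  integral_exp_pos (integrable_comp_history hmeas (expCount t))

end History

namespace IsDiscreteHawkes

variable {Ω : Type*} [mΩ : MeasurableSpace Ω] {μ : Measure Ω} {a : ℕ → ℝ} {ξ : ℕ → Ω → ℝ}
  {m : ℕ} (h : IsDiscreteHawkes μ a ξ)
include h

theorem integral_xi_one (ha₀ : 0 ≤ a 0) : ∫ ω, ξ 1 ω ∂μ = a 0 := by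
  have hs : MeasurableSet {ω | ξ 1 ω = 1} := h.measurable 1 (measurableSet_singleton 1)
  have hind : ξ 1 = {ω | ξ 1 ω = 1}.indicator 1 := by
    funext ω
    rcases h.mem_zero_one 1 le_rfl ω with hω | hω <;> simp [hω]
  rw [hind, integral_indicator_one hs, measureReal_def, h.measure_first, ENNReal.toReal_ofReal ha₀]

variable [IsProbabilityMeasure μ]

theorem integrable_mul_xi_succ (H : (Fin m → Bool) → ℝ) :
    Integrable (fun ω => H (history ξ m ω) * ξ (m + 1) ω) μ := by
  refine (integrable_comp_history (m := m + 1) h.measurable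
    fun b => H (Fin.init b) * (b (Fin.last m)).toNat).congr (ae_of_all _ fun ω => ?_)
  simp only [history_succ, Fin.init_snoc, Fin.snoc_last]
  rw [← xi_eq_toNat h.mem_zero_one (Nat.le_add_left 1 m) ω]

theorem integrable_xi_succ (m : ℕ) : Integrable (ξ (m + 1)) μ := by
  simpa using h.integrable_mul_xi_succ (m := m) 1

theorem integral_mul_xi_succ (ha₀ : 0 ≤ a 0) (H : (Fin m → Bool) → ℝ) :
    ∫ ω, H (history ξ m ω) * ξ (m + 1) ω ∂μ
      = ∫ ω, H (history ξ m ω) * intensity a m (history ξ m ω) ∂μ := by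
  rcases Nat.eq_zero_or_pos m with rfl | hm
  · simp only [history_zero]
    rw [integral_const_mul, h.integral_xi_one ha₀]
    simp [intensity]
  have hcond := h.condExp_eq (m + 1) (by omega)
  rw [Nat.add_sub_cancel] at hcond
  have hle : ⨆ i ∈ Finset.Icc 1 m, MeasurableSpace.comap (ξ i) Real.measurableSpace ≤ mΩ :=
    iSup₂_le fun i _ => (h.measurable i).comap_le
  have hH : StronglyMeasurable[⨆ i ∈ Finset.Icc 1 m,
      MeasurableSpace.comap (ξ i) Real.measurableSpace] fun ω => H (history ξ m ω) := by
    refine (Measurable.of_discrete.comp (measurable_history fun j => ?_)).stronglyMeasurable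
    exact measurable_iff_comap_le.2 (le_iSup₂ (f := fun i (_ : i ∈ Finset.Icc 1 m) =>
      MeasurableSpace.comap (ξ i) Real.measurableSpace) (j + 1)
      (Finset.mem_Icc.2 ⟨Nat.le_add_left 1 j, j.2⟩))
  rw [integral_mul_eq_integral_mul_of_condExp_ae_eq hle hH (h.integrable_mul_xi_succ H)
    (h.integrable_xi_succ m) hcond]
  simp only [intensity_history h.mem_zero_one]

theorem integral_xi_succ_eq_intensity (ha₀ : 0 ≤ a 0) (m : ℕ) :
    ∫ ω, ξ (m + 1) ω ∂μ = ∫ ω, intensity a m (history ξ m ω) ∂μ := by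
  simpa using h.integral_mul_xi_succ ha₀ (m := m) 1

theorem integral_xi_succ_renewal (ha₀ : 0 ≤ a 0) (m : ℕ) :
    ∫ ω, ξ (m + 1) ω ∂μ = a 0 + ∑ j ∈ Finset.range m, a (m - j) * ∫ ω, ξ (j + 1) ω ∂μ := by
  have hint : ∀ j ∈ Finset.range m, Integrable (fun ω => a (m - j) * ξ (j + 1) ω) μ :=
    fun j _ => (h.integrable_xi_succ j).const_mul _
  calc ∫ ω, ξ (m + 1) ω ∂μ = ∫ ω, intensity a m (history ξ m ω) ∂μ :=
        h.integral_xi_succ_eq_intensity ha₀ m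
    _ = ∫ ω, (a 0 + ∑ j ∈ Finset.range m, a (m - j) * ξ (j + 1) ω) ∂μ := by
        congr 1 with ω
        rw [intensity, ← Fin.sum_univ_eq_sum_range (fun j => a (m - j) * ξ (j + 1) ω)]
        simp only [xi_succ_eq_history h.mem_zero_one]
    _ = a 0 + ∑ j ∈ Finset.range m, a (m - j) * ∫ ω, ξ (j + 1) ω ∂μ := by
        rw [integral_add (integrable_const _) (integrable_finsetSum _ hint),
          integral_finsetSum _ hint]
        simp [integral_const_mul]

theorem integral_comp_history_succ (ha₀ : 0 ≤ a 0) (F : (Fin (m + 1) → Bool) → ℝ) :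
    ∫ ω, F (history ξ (m + 1) ω) ∂μ = ∫ ω, transition a m F (history ξ m ω) ∂μ := by
  set F₀ : (Fin m → Bool) → ℝ := fun b => F (Fin.snoc b false)
  set D : (Fin m → Bool) → ℝ := fun b => F (Fin.snoc b true) - F (Fin.snoc b false)
  have hjump := h.integral_mul_xi_succ ha₀ D
  simp only [comp_history_succ h.mem_zero_one F]
  rw [integral_add (integrable_comp_history h.measurable F₀) (h.integrable_mul_xi_succ D), hjump,
    ← integral_add (integrable_comp_history h.measurable F₀)
      (integrable_comp_history h.measurable fun b => D b * intensity a m b)]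
  congr 1 with ω
  simp only [F₀, D, transition]
  ring

theorem integral_expCount_succ (ha₀ : 0 ≤ a 0) (t : ℝ) (n : ℕ) :
    ∫ ω, expCount t (history ξ (n + 1) ω) ∂μ
      = ∫ ω, expCount t (history ξ n ω)
          * (1 + (Real.exp t - 1) * intensity a n (history ξ n ω)) ∂μ := by
  simp only [h.integral_comp_history_succ ha₀, transition_expCount]

variable (ha : ∀ i, 0 ≤ a i) (hsum : Summable fun i => a (i + 1))
  (hle : a 0 + ∑' i, a (i + 1) ≤ 1)
include ha hsum hle

theorem integral_mul_integral_le_integral_mul :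
    ∀ {m : ℕ} {F G : (Fin m → Bool) → ℝ}, Monotone F → Monotone G →
      (∫ ω, F (history ξ m ω) ∂μ) * ∫ ω, G (history ξ m ω) ∂μ
        ≤ ∫ ω, F (history ξ m ω) * G (history ξ m ω) ∂μ
  | 0, F, G, _, _ => by simp [history_zero]
  | m + 1, F, G, hF, hG => by
    have hint := integrable_comp_history (μ := μ) (m := m) h.measurable
    calc (∫ ω, F (history ξ (m + 1) ω) ∂μ) * ∫ ω, G (history ξ (m + 1) ω) ∂μ
        = (∫ ω, transition a m F (history ξ m ω) ∂μ)
            * ∫ ω, transition a m G (history ξ m ω) ∂μ := by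
          rw [h.integral_comp_history_succ (ha 0), h.integral_comp_history_succ (ha 0)]
      _ ≤ ∫ ω, transition a m F (history ξ m ω) * transition a m G (history ξ m ω) ∂μ :=
          integral_mul_integral_le_integral_mul (transition_mono ha hsum hle hF)
            (transition_mono ha hsum hle hG)
      _ ≤ ∫ ω, transition a m (F * G) (history ξ m ω) ∂μ :=
          integral_mono (hint fun b => transition a m F b * transition a m G b)
            (hint (transition a m (F * G))) fun ω =>
            transition_mul_transition_le ha hsum hle hF hG _
      _ = ∫ ω, F (history ξ (m + 1) ω) * G (history ξ (m + 1) ω) ∂μ :=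
          (h.integral_comp_history_succ (ha 0) (F * G)).symm

theorem integral_expCount_succ_ge (t : ℝ) (n : ℕ) :
    (1 + (Real.exp t - 1) * ∫ ω, ξ (n + 1) ω ∂μ) * ∫ ω, expCount t (history ξ n ω) ∂μ
      ≤ ∫ ω, expCount t (history ξ (n + 1) ω) ∂μ := by
  set φ := Real.exp t - 1
  have hint := integrable_comp_history (μ := μ) (m := n) h.measurable
  have hassoc := h.integral_mul_integral_le_integral_mul ha hsum hle
    (monotone_mul_expCount t) (intensity_mono (m := n) ha)
  have hsplit : ∫ ω, expCount t (history ξ n ω) * (1 + φ * intensity a n (history ξ n ω)) ∂μ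
      = ∫ ω, expCount t (history ξ n ω) ∂μ
        + ∫ ω, φ * expCount t (history ξ n ω) * intensity a n (history ξ n ω) ∂μ := by
    rw [← integral_add (hint _) (hint fun b => φ * expCount t b * intensity a n b)]
    congr 1 with ω
    ring
  rw [h.integral_expCount_succ (ha 0), hsplit, h.integral_xi_succ_eq_intensity (ha 0)]
  rw [integral_const_mul] at hassoc
  linarith

theorem integral_expCount_succ_le (t : ℝ) (n : ℕ) :
    ∫ ω, expCount t (history ξ (n + 1) ω) ∂μ
      ≤ (1 + |Real.exp t - 1|) * ∫ ω, expCount t (history ξ n ω) ∂μ := by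
  have hint := integrable_comp_history (μ := μ) (m := n) h.measurable
  rw [h.integral_expCount_succ (ha 0), ← integral_const_mul]
  refine integral_mono (hint fun b => expCount t b * (1 + (Real.exp t - 1) * intensity a n b))
    (hint fun b => (1 + |Real.exp t - 1|) * expCount t b) fun ω => ?_
  have hq₀ := intensity_nonneg ha (history ξ n ω)
  have hq₁ := intensity_le_one ha hsum hle (history ξ n ω)
  have hjump : (Real.exp t - 1) * intensity a n (history ξ n ω) ≤ |Real.exp t - 1| :=
    calc _ ≤ |Real.exp t - 1| * intensity a n (history ξ n ω) :=
          mul_le_mul_of_nonneg_right (le_abs_self _) hq₀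
      _ ≤ |Real.exp t - 1| := mul_le_of_le_one_right (abs_nonneg _) hq₁
  simp only
  rw [mul_comm]
  exact mul_le_mul_of_nonneg_right (by linarith) (Real.exp_pos _).le

end IsDiscreteHawkes

theorem le_liminf_succ_div {M r : ℕ → ℝ} {L B : ℝ} (hM : ∀ n, 0 < M n)
    (hlow : ∀ n, r n * M n ≤ M (n + 1)) (hup : ∀ n, M (n + 1) ≤ B * M n)
    (hr : Tendsto r atTop (𝓝 L)) : L ≤ liminf (fun n => M (n + 1) / M n) atTop := by
  rw [← hr.liminf_eq]
  exact liminf_le_liminf (Eventually.of_forall fun n => (le_div_iff₀ (hM n)).2 (hlow n))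
    hr.isBoundedUnder_ge
    (isCoboundedUnder_ge_of_le _ fun n => (div_le_iff₀ (hM n)).2 (hup n))

end DTHP

open DTHP in
theorem dthp_mgf_ratio_liminf_general
    {Ω : Type*} [MeasurableSpace Ω] (μ : Measure Ω) [IsProbabilityMeasure μ]
    (a : ℕ → ℝ) (ξ : ℕ → Ω → ℝ)
    (ha_pos : ∀ i, 0 < a i)
    (ha_sum : Summable a)
    (ha_lt_one : ∑' i, a i < 1)
    (hmeas : ∀ n, Measurable (ξ n))
    (hval : ∀ n, 1 ≤ n → ∀ ω, ξ n ω = 0 ∨ ξ n ω = 1)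
    (hinit : μ {ω | ξ 1 ω = 1} = ENNReal.ofReal (a 0))
    (hcond : ∀ n, 2 ≤ n →
      μ[ξ n | ⨆ i ∈ Finset.Icc 1 (n - 1), MeasurableSpace.comap (ξ i) Real.measurableSpace]
        =ᵐ[μ] fun ω => a 0 + ∑ i ∈ Finset.Icc 1 (n - 1), a (n - i) * ξ i ω)
    :
    ∀ t : ℝ,
      1 + (Real.exp t - 1) * (a 0 / (1 - ∑' i, a (i + 1))) ≤
        Filter.liminf
          (fun n : ℕ =>
            (∫ ω, Real.exp (t * ∑ i ∈ Finset.Icc 1 (n + 1), ξ i ω) ∂μ) /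
              ∫ ω, Real.exp (t * ∑ i ∈ Finset.Icc 1 n, ξ i ω) ∂μ)
          atTop := by
  intro t
  have h : IsDiscreteHawkes μ a ξ := ⟨hmeas, hval, hinit, hcond⟩
  have ha : ∀ i, 0 ≤ a i := fun i => (ha_pos i).le
  have hsum : Summable fun i => a (i + 1) := (summable_nat_add_iff 1).2 ha_sum
  have hle : a 0 + ∑' i, a (i + 1) ≤ 1 := ha_sum.tsum_eq_zero_add ▸ ha_lt_one.le
  have hmean := renewal_tendsto ha hsum (by linarith [ha_pos 0]) (h.integral_xi_succ_renewal (ha 0))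
  have hmgf : ∀ n, ∫ ω, Real.exp (t * ∑ i ∈ Finset.Icc 1 n, ξ i ω) ∂μ
      = ∫ ω, expCount t (history ξ n ω) ∂μ := fun n => by
    congr 1 with ω
    rw [expCount]
    congr 2
    simpa using sum_Icc_mul_xi (m := n) hval 1 ω
  simp only [hmgf]
  exact le_liminf_succ_div (integral_expCount_pos hmeas t)
    (h.integral_expCount_succ_ge ha hsum hle t) (h.integral_expCount_succ_le ha hsum hle t)
    ((hmean.const_mul _).const_add 1)

theorem dthp_mgf_ratio_liminf
    {Ω : Type*} [MeasurableSpace Ω] (μ : Measure Ω) [IsProbabilityMeasure μ]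
    (a : ℕ → ℝ) (ξ : ℕ → Ω → ℝ)
    (ha_pos : ∀ i, 0 < a i)
    (ha_sum : Summable a)
    (ha_lt_one : ∑' i, a i < 1)
    (ha_moment : Summable (fun i : ℕ => (i : ℝ) * a i))
    (hmeas : ∀ n, Measurable (ξ n))
    (hval : ∀ n, 1 ≤ n → ∀ ω, ξ n ω = 0 ∨ ξ n ω = 1)
    (hinit : μ {ω | ξ 1 ω = 1} = ENNReal.ofReal (a 0))
    (hcond : ∀ n, 2 ≤ n →
      μ[ξ n | ⨆ i ∈ Finset.Icc 1 (n - 1), MeasurableSpace.comap (ξ i) Real.measurableSpace]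
        =ᵐ[μ] fun ω => a 0 + ∑ i ∈ Finset.Icc 1 (n - 1), a (n - i) * ξ i ω)
    :
    ∀ t : ℝ,
      1 + (Real.exp t - 1) * (a 0 / (1 - ∑' i, a (i + 1))) ≤
        Filter.liminf
          (fun n : ℕ =>
            (∫ ω, Real.exp (t * ∑ i ∈ Finset.Icc 1 (n + 1), ξ i ω) ∂μ) /
              ∫ ω, Real.exp (t * ∑ i ∈ Finset.Icc 1 n, ξ i ω) ∂μ)
          atTop :=
  dthp_mgf_ratio_liminf_general μ a ξ ha_pos ha_sum ha_lt_one hmeas hval hinit hcond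
end
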